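/- arXiv:1106.3954 — 2 statements merged into one kernel-verified Lean document; each statement's English description precedes it below -/
import Mathlib

section
/- (Lemma 1.) Fix an integer p ≥ 1 (with an associated Gaussian field g for p), t ∈ ℝ, and let π be a measurable reordering for (p,t). Suppose that for every k ≥ 1 the joint law of ((w^t_{π(l)})_{l<k}, (g_{π(l)} − b_p t)_{l<k}, (Q_{π(l),π(l')})_{l,l'<k}) equals the joint law of ((w_l)_{l<k}, (g_l)_{l<k}, (Q_{l,l'})_{l,l'<k}). Then for every k ≥ 1, all integers n₁,…,n_k ≥ 0 and every bounded measurable f : (Fin k → Fin k → ℝ) → ℝ, E[Σ_{j : Fin k → ℕ} (Π_i w^t_{j i}) (Π_i (g_{j i} − b_p t)^{n_i}) f((Q_{j i, j i'}))] = E[Σ_{j : Fin k → ℕ} (Π_i w_{j i}) (Π_i (g_{j i})^{n_i}) f((Q_{j i, j i'}))]. -/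
open MeasureTheory ProbabilityTheory Real

noncomputable section

/-- The Hilbert space ℓ²(ℕ, ℝ). -/
abbrev ℓ2 : Type := lp (fun _ : ℕ => ℝ) 2

instance : MeasurableSpace ℓ2 := borel ℓ2
instance : BorelSpace ℓ2 := ⟨rfl⟩

/-- The Gram matrix (overlaps) of the atoms `ξ`. -/
def overlap {Ω₁ : Type*} (ξ : Ω₁ → ℕ → ℓ2) (ω₁ : Ω₁) (l l' : ℕ) : ℝ :=
  inner (𝕜 := ℝ) (ξ ω₁ l) (ξ ω₁ l')

/-- The Gibbs average of a bounded measurable function of the overlap array of `n` replicas,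
with weights `W` and overlap matrix `Q`. -/
def gibbs (W : ℕ → ℝ) (Q : ℕ → ℕ → ℝ) (n : ℕ) (f : (Fin n → Fin n → ℝ) → ℝ) : ℝ :=
  ∑' j : Fin n → ℕ, (∏ i, W (j i)) * f (fun i i' => Q (j i) (j i'))

/-- `f` is a bounded function. -/
def Bdd {α : Type*} (f : α → ℝ) : Prop := ∃ C, ∀ x, |f x| ≤ C

/-- The data `(w, ξ)` models a random discrete measure `G = ∑ w_l δ_{ξ_l}` on the unit ball
of ℓ², with nonincreasing nonnegative weights summing to one. -/
def IsRandomMeasure {Ω₁ : Type*} [MeasurableSpace Ω₁] (P₁ : Measure Ω₁)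
    (w : Ω₁ → ℕ → ℝ) (ξ : Ω₁ → ℕ → ℓ2) : Prop :=
  (∀ l, Measurable fun ω₁ => w ω₁ l) ∧ (∀ l, Measurable fun ω₁ => ξ ω₁ l) ∧
    ∀ᵐ ω₁ ∂P₁, (∀ l, 0 ≤ w ω₁ l) ∧ Antitone (w ω₁) ∧ HasSum (w ω₁) 1 ∧ ∀ l, ‖ξ ω₁ l‖ ≤ 1

/-- `g` is, conditionally on `ω₁`, a centered Gaussian field on the atoms with covariance
`Cov(g_l, g_{l'}) = Q_{l,l'}^p`; characterized by the moment generating function. -/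
def IsGaussianField {Ω₁ Ω₂ : Type*} [MeasurableSpace Ω₁] [MeasurableSpace Ω₂]
    (P₁ : Measure Ω₁) (P₂ : Measure Ω₂) (ξ : Ω₁ → ℕ → ℓ2) (p : ℕ)
    (g : Ω₁ × Ω₂ → ℕ → ℝ) : Prop :=
  (∀ l, Measurable fun ω => g ω l) ∧
    ∀ᵐ ω₁ ∂P₁, ∀ k : ℕ, 1 ≤ k → ∀ l : Fin k → ℕ, ∀ s : Fin k → ℝ,
      ∫ ω₂, Real.exp (∑ i, s i * g (ω₁, ω₂) (l i)) ∂P₂ =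
        Real.exp ((1 / 2) * ∑ i, ∑ i', s i * s i' * (overlap ξ ω₁ (l i) (l i')) ^ p)

/-- The tilted weights `w^t_l = w_l e^{t g_l} / ∑_m w_m e^{t g_m}`. -/
def tilt {Ω₁ Ω₂ : Type*} (w : Ω₁ → ℕ → ℝ) (g : Ω₁ × Ω₂ → ℕ → ℝ) (t : ℝ)
    (ω : Ω₁ × Ω₂) (l : ℕ) : ℝ :=
  w ω.1 l * Real.exp (t * g ω l) / ∑' m, w ω.1 m * Real.exp (t * g ω m)

/-- `E⟨f⟩`: expected Gibbs average of `f` over `n` replicas. -/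
def EGibbs {Ω₁ : Type*} [MeasurableSpace Ω₁] (P₁ : Measure Ω₁)
    (w : Ω₁ → ℕ → ℝ) (ξ : Ω₁ → ℕ → ℓ2) (n : ℕ) (f : (Fin n → Fin n → ℝ) → ℝ) : ℝ :=
  ∫ ω₁, gibbs (w ω₁) (overlap ξ ω₁) n f ∂P₁

/-- `b_p = (q*)^p - E⟨R_{1,2}^p⟩`. -/
def bCoef {Ω₁ : Type*} [MeasurableSpace Ω₁] (P₁ : Measure Ω₁)
    (w : Ω₁ → ℕ → ℝ) (ξ : Ω₁ → ℕ → ℓ2) (qs : ℝ) (p : ℕ) : ℝ :=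
  qs ^ p - EGibbs P₁ w ξ 2 (fun R => (R 0 1) ^ p)

/-- `G` is concentrated on the sphere of radius `√q*`. -/
def ConcOnSphere {Ω₁ : Type*} [MeasurableSpace Ω₁] (P₁ : Measure Ω₁)
    (w : Ω₁ → ℕ → ℝ) (ξ : Ω₁ → ℕ → ℓ2) (qs : ℝ) : Prop :=
  ∀ᵐ ω₁ ∂P₁, ∀ l, 0 < w ω₁ l → overlap ξ ω₁ l l = qs

/-- The Ghirlanda–Guerra identities: for every `n ≥ 2` (here `n+2`), every `p ≥ 1` and every
bounded measurable `f` of the overlaps of `n` replicas,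
`n E⟨f R_{1,n+1}^p⟩ = E⟨f⟩ E⟨R_{1,2}^p⟩ + ∑_{m=2}^n E⟨f R_{1,m}^p⟩`. -/
def GGIdentities {Ω₁ : Type*} [MeasurableSpace Ω₁] (P₁ : Measure Ω₁)
    (w : Ω₁ → ℕ → ℝ) (ξ : Ω₁ → ℕ → ℓ2) : Prop :=
  ∀ n : ℕ, ∀ p : ℕ, 1 ≤ p → ∀ f : (Fin (n + 2) → Fin (n + 2) → ℝ) → ℝ,
    Measurable f → Bdd f →
    ((n + 2 : ℕ) : ℝ) * EGibbs P₁ w ξ (n + 3)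
        (fun R => f (fun a b => R a.castSucc b.castSucc) * (R 0 (Fin.last (n + 2))) ^ p)
      = EGibbs P₁ w ξ (n + 2) f * EGibbs P₁ w ξ 2 (fun R => (R 0 1) ^ p)
        + ∑ m : Fin (n + 2), if m = 0 then 0
            else EGibbs P₁ w ξ (n + 2) (fun R => f R * (R 0 m) ^ p)

/-- The Aizenman–Contucci stochastic stability in average form, for the family of Gaussian
fields `g p`: `E⟨f⟩_t = E⟨f⟩`. -/
def ACStability {Ω₁ Ω₂ : Type*} [MeasurableSpace Ω₁] [MeasurableSpace Ω₂]
    (P₁ : Measure Ω₁) (P₂ : Measure Ω₂) (w : Ω₁ → ℕ → ℝ) (ξ : Ω₁ → ℕ → ℓ2)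
    (g : ℕ → Ω₁ × Ω₂ → ℕ → ℝ) : Prop :=
  ∀ p : ℕ, 1 ≤ p → ∀ t : ℝ, ∀ n : ℕ, 1 ≤ n → ∀ f : (Fin n → Fin n → ℝ) → ℝ,
    Measurable f → Bdd f →
    ∫ ω, gibbs (tilt w (g p) t ω) (overlap ξ ω.1) n f ∂(P₁.prod P₂) = EGibbs P₁ w ξ n f

/-- The unified average identities for `(p, t)` with shift constant `b`: equality of all joint
moments of the (shifted) Gaussian values and bounded measurable functions of the overlaps,
under the tilted and the original Gibbs averages. -/
def UnifiedAvg {Ω₁ Ω₂ : Type*} [MeasurableSpace Ω₁] [MeasurableSpace Ω₂]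
    (P₁ : Measure Ω₁) (P₂ : Measure Ω₂) (w : Ω₁ → ℕ → ℝ) (ξ : Ω₁ → ℕ → ℓ2)
    (g : Ω₁ × Ω₂ → ℕ → ℝ) (t b : ℝ) : Prop :=
  ∀ k : ℕ, 1 ≤ k → ∀ nn : Fin k → ℕ, ∀ f : (Fin k → Fin k → ℝ) → ℝ,
    Measurable f → Bdd f →
    ∫ ω, ∑' j : Fin k → ℕ, (∏ i, tilt w g t ω (j i)) *
        (∏ i, (g ω (j i) - b * t) ^ nn i) *
        f (fun i i' => overlap ξ ω.1 (j i) (j i')) ∂(P₁.prod P₂)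
      = ∫ ω, ∑' j : Fin k → ℕ, (∏ i, w ω.1 (j i)) *
          (∏ i, (g ω (j i)) ^ nn i) *
          f (fun i i' => overlap ξ ω.1 (j i) (j i')) ∂(P₁.prod P₂)

/-- A measurable reordering for `(p, t)`: a random permutation of ℕ, measurable in `ω`,
such that almost surely `l ↦ w^t_{prm(l)}` is nonincreasing. -/
def IsReordering {Ω₁ Ω₂ : Type*} [MeasurableSpace Ω₁] [MeasurableSpace Ω₂]
    (P₁ : Measure Ω₁) (P₂ : Measure Ω₂) (w : Ω₁ → ℕ → ℝ)
    (g : Ω₁ × Ω₂ → ℕ → ℝ) (t : ℝ) (prm : Ω₁ × Ω₂ → Equiv.Perm ℕ) : Prop :=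
  (∀ l, Measurable fun ω => prm ω l) ∧
    ∀ᵐ ω ∂(P₁.prod P₂), Antitone fun l => tilt w g t ω (prm ω l)

/-!
Reindexing the tilted Gibbs sum `∑_j` by the random permutation `π` writes the left-hand
integrand as one fixed measurable functional of the reordered arrays
`(w^t ∘ π, g ∘ π - b t, Q ∘ π)`, and the right-hand integrand as the same functional of
`(w, g, Q)`. The hypothesis says that all finite truncations of these two random arrays have
the same law; since the truncations generate the product σ-algebra, the full arrays have the
same law (Dynkin's π-λ theorem), so the two expectations agree.
-/

theorem MeasureTheory.Measure.ext_of_map_eq_of_iSup_comap {α : Type*} {β : ℕ → Type*}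
    [mα : MeasurableSpace α] [mβ : ∀ n, MeasurableSpace (β n)] {μ ν : Measure α}
    [IsFiniteMeasure μ] {f : ∀ n, α → β n}
    (hmono : Monotone fun n => (mβ n).comap (f n)) (hgen : mα = ⨆ n, (mβ n).comap (f n))
    (h : ∀ n, μ.map (f n) = ν.map (f n)) : μ = ν := by
  have hf (n : ℕ) : Measurable (f n) :=
    Measurable.of_comap_le (hgen ▸ le_iSup (fun n => (mβ n).comap (f n)) n)
  refine ext_of_generate_finite (⋃ n, {s | MeasurableSet[(mβ n).comap (f n)] s})
    (hgen.trans (MeasurableSpace.generateFrom_iUnion_measurableSet _).symm)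
    (isPiSystem_iUnion_of_monotone _
      (fun n => @MeasurableSpace.isPiSystem_measurableSet _ ((mβ n).comap (f n)))
      fun n m hnm s hs => hmono hnm s hs) ?_ ?_
  · simp only [Set.mem_iUnion, Set.mem_ofPred_eq]
    rintro _ ⟨n, A, hA, rfl⟩
    rw [← Measure.map_apply (hf n) hA, ← Measure.map_apply (hf n) hA, h n]
  · rw [← Set.preimage_univ (f := f 0), ← Measure.map_apply (hf 0) MeasurableSet.univ,
      ← Measure.map_apply (hf 0) MeasurableSet.univ, h 0]

theorem Measurable.eval_of_countable {Ω ι δ : Type*} [MeasurableSpace Ω] [MeasurableSpace ι]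
    [MeasurableSpace δ] [Countable ι] [MeasurableSingletonClass ι] {F : Ω → ι → δ}
    (hF : Measurable F) {n : Ω → ι} (hn : Measurable n) : Measurable fun ω => F ω (n ω) :=
  (measurable_from_prod_countable_left (f := fun p : Ω × ι => F p.1 p.2)
    fun i => (measurable_pi_apply i).comp hF).comp (measurable_id.prodMk hn)

/-- Weights `(w_l)`, field values `(g_l)` and overlaps `(Q_{l,l'})` indexed by the atoms. -/
abbrev ReplicaArrays (α β γ : Type*) : Type _ := (ℕ → α) × (ℕ → β) × (ℕ → ℕ → γ)

namespace ReplicaArrays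

variable {α β γ : Type*} [MeasurableSpace α] [MeasurableSpace β] [MeasurableSpace γ]

def truncate (K : ℕ) (x : ReplicaArrays α β γ) :
    (Fin K → α) × (Fin K → β) × (Fin K → Fin K → γ) :=
  (fun l => x.1 l, fun l => x.2.1 l, fun l l' => x.2.2 l l')

def reindex (σ : Equiv.Perm ℕ) (x : ReplicaArrays α β γ) : ReplicaArrays α β γ :=
  (x.1 ∘ σ, x.2.1 ∘ σ, fun l l' => x.2.2 (σ l) (σ l'))

theorem measurable_truncate (K : ℕ) : Measurable (truncate (α := α) (β := β) (γ := γ) K) := by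
  unfold truncate; fun_prop

theorem monotone_comap_truncate :
    Monotone fun K =>
      MeasurableSpace.comap (truncate (α := α) (β := β) (γ := γ) K) inferInstance := by
  intro K K' hK
  have hfac : truncate K = (fun y : (Fin K' → α) × (Fin K' → β) × (Fin K' → Fin K' → γ) =>
      (fun l => y.1 (Fin.castLE hK l), fun l => y.2.1 (Fin.castLE hK l),
        fun l l' => y.2.2 (Fin.castLE hK l) (Fin.castLE hK l'))) ∘ truncate K' := rfl
  simp only [hfac, ← MeasurableSpace.comap_comp]
  exact MeasurableSpace.comap_mono (Measurable.comap_le (by fun_prop))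

theorem measurableSpace_eq_iSup_comap_truncate :
    (inferInstance : MeasurableSpace (ReplicaArrays α β γ)) =
      ⨆ K, MeasurableSpace.comap (truncate (K + 1)) inferInstance := by
  refine le_antisymm ?_ (iSup_le fun K => (measurable_truncate _).comap_le)
  -- from here on, `Measurable` on `ReplicaArrays α β γ` refers to the truncation σ-algebra
  let _ : MeasurableSpace (ReplicaArrays α β γ) :=
    ⨆ K, MeasurableSpace.comap (truncate (K + 1)) inferInstance
  have htrunc (K : ℕ) : Measurable (truncate (α := α) (β := β) (γ := γ) (K + 1)) :=
    Measurable.of_comap_le (le_iSup (fun K => MeasurableSpace.comap (truncate (K + 1)) _) K)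
  have hfst : Measurable fun x : ReplicaArrays α β γ => x.1 := by
    refine measurable_pi_iff.mpr fun l => ?_
    exact (measurable_pi_apply (⟨l, l.lt_succ_self⟩ : Fin (l + 1))).comp
      (measurable_fst.comp (htrunc l))
  have hsnd : Measurable fun x : ReplicaArrays α β γ => x.2 := by
    refine Measurable.prodMk (measurable_pi_iff.mpr fun l => ?_)
      (measurable_pi_iff.mpr fun l => measurable_pi_iff.mpr fun l' => ?_)
    · exact (measurable_pi_apply (⟨l, l.lt_succ_self⟩ : Fin (l + 1))).comp
        (measurable_fst.comp (measurable_snd.comp (htrunc l)))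
    · have hl : l < max l l' + 1 := Nat.lt_succ_of_le (le_max_left l l')
      have hl' : l' < max l l' + 1 := Nat.lt_succ_of_le (le_max_right l l')
      exact (measurable_pi_apply (⟨l', hl'⟩ : Fin _)).comp ((measurable_pi_apply
        (⟨l, hl⟩ : Fin _)).comp (measurable_snd.comp (measurable_snd.comp (htrunc _))))
  exact sup_le hfst.comap_le hsnd.comap_le

theorem ext_of_map_truncate {μ ν : Measure (ReplicaArrays α β γ)} [IsFiniteMeasure μ]
    (h : ∀ K, 1 ≤ K → μ.map (truncate K) = ν.map (truncate K)) : μ = ν :=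
  Measure.ext_of_map_eq_of_iSup_comap (f := fun K => truncate (K + 1))
    (monotone_comap_truncate.comp fun _ _ => Nat.succ_le_succ)
    measurableSpace_eq_iSup_comap_truncate fun K => h (K + 1) K.succ_pos

theorem measurable_reindex {Ω : Type*} [MeasurableSpace Ω] {x : Ω → ReplicaArrays α β γ}
    (hx : Measurable x) {σ : Ω → Equiv.Perm ℕ} (hσ : ∀ l, Measurable fun ω => σ ω l) :
    Measurable fun ω => reindex (σ ω) (x ω) := by
  unfold reindex
  refine Measurable.prodMk (measurable_pi_iff.mpr fun l => ?_)
    (Measurable.prodMk (measurable_pi_iff.mpr fun l => ?_)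
      (measurable_pi_iff.mpr fun l => measurable_pi_iff.mpr fun l' => ?_))
  · exact hx.fst.eval_of_countable (hσ l)
  · exact hx.snd.fst.eval_of_countable (hσ l)
  · exact (hx.snd.snd.eval_of_countable (hσ l)).eval_of_countable (hσ l')

end ReplicaArrays

namespace ReplicaArrays

section gibbsMoment

variable {k : ℕ} (nn : Fin k → ℕ)

def gibbsMoment (f : (Fin k → Fin k → ℝ) → ℝ) (x : ReplicaArrays ℝ ℝ ℝ) : ℝ :=
  ∑' j : Fin k → ℕ, (∏ i, x.1 (j i)) * (∏ i, x.2.1 (j i) ^ nn i) *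
    f (fun i i' => x.2.2 (j i) (j i'))

theorem gibbsMoment_reindex (f : (Fin k → Fin k → ℝ) → ℝ) (σ : Equiv.Perm ℕ)
    (x : ReplicaArrays ℝ ℝ ℝ) : gibbsMoment nn f (reindex σ x) = gibbsMoment nn f x :=
  (Equiv.piCongrRight fun _ : Fin k => σ).tsum_eq fun j =>
    (∏ i, x.1 (j i)) * (∏ i, x.2.1 (j i) ^ nn i) * f (fun i i' => x.2.2 (j i) (j i'))

theorem measurable_gibbsMoment {f : (Fin k → Fin k → ℝ) → ℝ} (hf : Measurable f) :
    Measurable (gibbsMoment nn f) :=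
  Measurable.tsum fun j => by fun_prop

end gibbsMoment

end ReplicaArrays

theorem measurable_overlap {Ω₁ : Type*} [MeasurableSpace Ω₁] {ξ : Ω₁ → ℕ → ℓ2}
    (hξ : ∀ l, Measurable fun ω₁ => ξ ω₁ l) (l l' : ℕ) :
    Measurable fun ω₁ => overlap ξ ω₁ l l' := by
  have hcoord (n : ℕ) : Measurable fun x : ℓ2 => x n :=
    (lp.lipschitzWith_one_eval 2 n).continuous.measurable
  simp only [overlap, lp.inner_eq_tsum, RCLike.inner_apply, conj_trivial]
  exact Measurable.tsum fun n => ((hcoord n).comp (hξ l')).mul ((hcoord n).comp (hξ l))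

theorem measurable_tilt {Ω₁ Ω₂ : Type*} [MeasurableSpace Ω₁] [MeasurableSpace Ω₂]
    {w : Ω₁ → ℕ → ℝ} {g : Ω₁ × Ω₂ → ℕ → ℝ} (hw : ∀ l, Measurable fun ω₁ => w ω₁ l)
    (hg : ∀ l, Measurable fun ω => g ω l) (t : ℝ) (l : ℕ) :
    Measurable fun ω => tilt w g t ω l := by
  have hterm (m : ℕ) : Measurable fun ω : Ω₁ × Ω₂ => w ω.1 m * Real.exp (t * g ω m) :=
    ((hw m).comp measurable_fst).mul ((hg m).const_mul t).exp
  exact (hterm l).div (Measurable.tsum hterm)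

open ReplicaArrays in
theorem law_equality_implies_unified_general
    {Ω₁ Ω₂ : Type*} [MeasurableSpace Ω₁] [MeasurableSpace Ω₂]
    (P₁ : Measure Ω₁) (P₂ : Measure Ω₂)
    [IsProbabilityMeasure P₁] [IsProbabilityMeasure P₂]
    (w : Ω₁ → ℕ → ℝ) (ξ : Ω₁ → ℕ → ℓ2)
    (qs : ℝ)
    (hRM : IsRandomMeasure P₁ w ξ)
    (p : ℕ) (g : Ω₁ × Ω₂ → ℕ → ℝ)
    (hg : IsGaussianField P₁ P₂ ξ p g)
    (t : ℝ) (prm : Ω₁ × Ω₂ → Equiv.Perm ℕ)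
    (hprm : IsReordering P₁ P₂ w g t prm)
    (hLaw : ∀ k : ℕ, 1 ≤ k →
      Measure.map (fun ω =>
          ((fun l : Fin k => tilt w g t ω (prm ω l)),
           (fun l : Fin k => g ω (prm ω l) - bCoef P₁ w ξ qs p * t),
           (fun l l' : Fin k => overlap ξ ω.1 (prm ω l) (prm ω l')))) (P₁.prod P₂)
        = Measure.map (fun ω =>
            ((fun l : Fin k => w ω.1 l),
             (fun l : Fin k => g ω l),
             (fun l l' : Fin k => overlap ξ ω.1 l l'))) (P₁.prod P₂)) :
    UnifiedAvg P₁ P₂ w ξ g t (bCoef P₁ w ξ qs p) := by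
  obtain ⟨hw, hξ, -⟩ := hRM
  have hover (l l' : ℕ) : Measurable fun ω : Ω₁ × Ω₂ => overlap ξ ω.1 l l' :=
    (measurable_overlap hξ l l').comp measurable_fst
  set Φ : Ω₁ × Ω₂ → ReplicaArrays ℝ ℝ ℝ := fun ω =>
    reindex (prm ω) (tilt w g t ω, fun l => g ω l - bCoef P₁ w ξ qs p * t, overlap ξ ω.1)
  set Ψ : Ω₁ × Ω₂ → ReplicaArrays ℝ ℝ ℝ := fun ω => (w ω.1, g ω, overlap ξ ω.1)
  have hΦ : Measurable Φ := by
    refine measurable_reindex (Measurable.prodMk ?_ (Measurable.prodMk ?_ ?_)) hprm.1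
    · exact measurable_pi_lambda _ (measurable_tilt hw hg.1 t)
    · exact measurable_pi_lambda _ fun l => (hg.1 l).sub_const _
    · exact measurable_pi_lambda _ fun l => measurable_pi_lambda _ (hover l)
  have hΨ : Measurable Ψ := by
    refine Measurable.prodMk ?_ (Measurable.prodMk ?_ ?_)
    · exact measurable_pi_lambda _ fun l => (hw l).comp measurable_fst
    · exact measurable_pi_lambda _ hg.1
    · exact measurable_pi_lambda _ fun l => measurable_pi_lambda _ (hover l)
  have hident : IdentDistrib Φ Ψ (P₁.prod P₂) (P₁.prod P₂) := by
    refine ⟨hΦ.aemeasurable, hΨ.aemeasurable, ext_of_map_truncate fun K hK => ?_⟩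
    rw [Measure.map_map (measurable_truncate K) hΦ, Measure.map_map (measurable_truncate K) hΨ]
    exact hLaw K hK
  intro k _ nn f hf _
  have h := (hident.comp (measurable_gibbsMoment nn hf)).integral_eq
  simp only [Φ, Ψ, Function.comp_def, gibbsMoment_reindex] at h
  exact h

/-- **Lemma 1.** Fix `p ≥ 1` with associated Gaussian field `g`, `t ∈ ℝ` and a
measurable reordering `prm` for `(p, t)`. If for every `k ≥ 1` the joint law of the reordered
tilted weights, shifted Gaussian values and overlaps coincides with the joint law of the
original weights, Gaussian values and overlaps, then the unified average identities hold
for `(p, t)`. -/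
theorem law_equality_implies_unified
    {Ω₁ Ω₂ : Type*} [MeasurableSpace Ω₁] [MeasurableSpace Ω₂]
    (P₁ : Measure Ω₁) (P₂ : Measure Ω₂)
    [IsProbabilityMeasure P₁] [IsProbabilityMeasure P₂]
    (w : Ω₁ → ℕ → ℝ) (ξ : Ω₁ → ℕ → ℓ2)
    (qs : ℝ) (hqs : qs ∈ Set.Icc (0 : ℝ) 1)
    (hRM : IsRandomMeasure P₁ w ξ)
    (p : ℕ) (hp : 1 ≤ p) (g : Ω₁ × Ω₂ → ℕ → ℝ)
    (hg : IsGaussianField P₁ P₂ ξ p g)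
    (t : ℝ) (prm : Ω₁ × Ω₂ → Equiv.Perm ℕ)
    (hprm : IsReordering P₁ P₂ w g t prm)
    (hLaw : ∀ k : ℕ, 1 ≤ k →
      Measure.map (fun ω =>
          ((fun l : Fin k => tilt w g t ω (prm ω l)),
           (fun l : Fin k => g ω (prm ω l) - bCoef P₁ w ξ qs p * t),
           (fun l l' : Fin k => overlap ξ ω.1 (prm ω l) (prm ω l')))) (P₁.prod P₂)
        = Measure.map (fun ω =>
            ((fun l : Fin k => w ω.1 l),
             (fun l : Fin k => g ω l),
             (fun l l' : Fin k => overlap ξ ω.1 l l'))) (P₁.prod P₂)) :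
    UnifiedAvg P₁ P₂ w ξ g t (bCoef P₁ w ξ qs p) :=
  law_equality_implies_unified_general P₁ P₂ w ξ qs hRM p g hg t prm hprm hLaw
end
end

section
/- (Lemma 1, weights-and-overlaps case.) Fix an integer p ≥ 1 (with an associated Gaussian field g for p), t ∈ ℝ, and let π be a measurable reordering for (p,t). Suppose that for every k ≥ 1 the joint law of ((w^t_{π(l)})_{l<k}, (Q_{π(l),π(l')})_{l,l'<k}) equals the joint law of ((w_l)_{l<k}, (Q_{l,l'})_{l,l'<k}). Then for every n ≥ 1 and every bounded measurable f : (Fin n → Fin n → ℝ) → ℝ, one has E⟨f⟩_t = E⟨f⟩, i.e., E[Σ_{j : Fin n → ℕ} (Π_i w^t_{j i}) f((Q_{j i, j i'}))] = E[Σ_{j : Fin n → ℕ} (Π_i w_{j i}) f((Q_{j i, j i'}))]. -/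
open MeasureTheory ProbabilityTheory Real

noncomputable section

/-! The Gibbs average is invariant under relabelling the atoms, so `⟨f⟩_t` is also the Gibbs
average of the reordered tilted weights and overlaps. Restricted to the first `k` atoms, a Gibbs
average is a bounded measurable function of the first `k` weights and overlaps, so its expectation
is the same under both laws. Both sequences of weights are a.s. sub-probability vectors (for the
tilted ones this is read off from the law equality), so dominated convergence as `k → ∞` gives
`E⟨f⟩_t = E⟨f⟩`. -/

open Filter Topology Finset

section FiniteGibbs

variable {n k : ℕ} {f : (Fin n → Fin n → ℝ) → ℝ} {C : ℝ} {W : ℕ → ℝ} {Q : ℕ → ℕ → ℝ}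

def finData (k : ℕ) (W : ℕ → ℝ) (Q : ℕ → ℕ → ℝ) : (Fin k → ℝ) × (Fin k → Fin k → ℝ) :=
  (fun l => W l, fun l l' => Q l l')

def subProbData (k : ℕ) : Set ((Fin k → ℝ) × (Fin k → Fin k → ℝ)) :=
  {x | (∀ l, 0 ≤ x.1 l) ∧ ∑ l, x.1 l ≤ 1}

def finGibbs (n k : ℕ) (f : (Fin n → Fin n → ℝ) → ℝ)
    (x : (Fin k → ℝ) × (Fin k → Fin k → ℝ)) : ℝ :=
  ∑ j : Fin n → Fin k, (∏ i, x.1 (j i)) * f (fun i i' => x.2 (j i) (j i'))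

lemma measurableSet_subProbData : MeasurableSet (subProbData k) := by
  rw [subProbData, Set.ofPred_and, Set.ofPred_forall]
  exact (MeasurableSet.iInter fun l => measurableSet_le measurable_const (by fun_prop)).inter
    (measurableSet_le (by fun_prop) measurable_const)

lemma measurable_finGibbs (hf : Measurable f) : Measurable (finGibbs n k f) := by
  unfold finGibbs
  fun_prop

lemma abs_finGibbs_le (hC : ∀ x, |f x| ≤ C) {x : (Fin k → ℝ) × (Fin k → Fin k → ℝ)}
    (hx : x ∈ subProbData k) : |finGibbs n k f x| ≤ C := by
  obtain ⟨hx0, hx1⟩ := hx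
  have hC0 : 0 ≤ C := (abs_nonneg _).trans (hC 0)
  calc |finGibbs n k f x| ≤ ∑ j : Fin n → Fin k, (∏ i, x.1 (j i)) * C := by
        refine (abs_sum_le_sum_abs _ _).trans (sum_le_sum fun j _ => ?_)
        rw [abs_mul, abs_of_nonneg (prod_nonneg fun i _ => hx0 _)]
        exact mul_le_mul_of_nonneg_left (hC _) (prod_nonneg fun i _ => hx0 _)
    _ = (∑ l, x.1 l) ^ n * C := by
        rw [← sum_mul, ← Fintype.prod_sum, prod_const, card_univ, Fintype.card_fin]
    _ ≤ C := mul_le_of_le_one_left hC0 (pow_le_one₀ (sum_nonneg fun l _ => hx0 l) hx1)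

lemma forall_finData_mem_subProbData_iff :
    (∀ k, finData k W Q ∈ subProbData k) ↔ (∀ l, 0 ≤ W l) ∧ ∀ k, ∑ l ∈ range k, W l ≤ 1 := by
  simp only [finData, subProbData, Set.mem_ofPred_eq, Fin.sum_univ_eq_sum_range W]
  exact ⟨fun h => ⟨fun l => (h (l + 1)).1 (Fin.last l), fun k => (h k).2⟩,
    fun h k => ⟨fun l => h.1 l, h.2 k⟩⟩

lemma exists_subset_piFinset_range (S : Finset (Fin n → ℕ)) :
    ∃ K, S ⊆ Fintype.piFinset fun _ => range K :=
  ⟨S.sup univ.sup + 1, fun _ hj => Fintype.mem_piFinset.2 fun i =>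
    mem_range.2 (Nat.lt_succ_of_le ((le_sup (mem_univ i)).trans (le_sup (f := univ.sup) hj)))⟩

lemma tendsto_piFinset_range_atTop :
    Tendsto (fun k => Fintype.piFinset fun _ : Fin n => range k) atTop atTop :=
  tendsto_atTop_finset_of_monotone
    (fun _ _ hab => Fintype.piFinset_subset _ _ fun _ => range_subset_range.2 hab)
    fun j => (exists_subset_piFinset_range {j}).imp fun _ h => h (mem_singleton_self j)

lemma sum_pi_fin_eq_sum_piFinset_range {M : Type*} [AddCommMonoid M] (F : (Fin n → ℕ) → M) :
    ∑ j : Fin n → Fin k, F (fun i => j i) = ∑ j ∈ Fintype.piFinset fun _ => range k, F j := by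
  refine sum_bij (fun j _ i => (j i : ℕ)) (by simp) ?_ ?_ (by simp)
  · intro a _ b _ h
    funext i
    exact Fin.ext (congrFun h i)
  · intro j hj
    simp only [Fintype.mem_piFinset, mem_range] at hj
    exact ⟨fun i => ⟨j i, hj i⟩, mem_univ _, rfl⟩

lemma sum_prod_le_one (hW0 : ∀ l, 0 ≤ W l) (hW1 : ∀ k, ∑ l ∈ range k, W l ≤ 1)
    (S : Finset (Fin n → ℕ)) : ∑ j ∈ S, ∏ i, W (j i) ≤ 1 := by
  obtain ⟨K, hK⟩ := exists_subset_piFinset_range S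
  calc ∑ j ∈ S, ∏ i, W (j i) ≤ ∑ j ∈ Fintype.piFinset fun _ => range K, ∏ i, W (j i) :=
        sum_le_sum_of_subset_of_nonneg hK fun _ _ _ => prod_nonneg fun i _ => hW0 _
    _ = (∑ l ∈ range K, W l) ^ n := by
        rw [← prod_univ_sum, prod_const, card_univ, Fintype.card_fin]
    _ ≤ 1 := pow_le_one₀ (sum_nonneg fun l _ => hW0 l) (hW1 K)

lemma summable_gibbs_term (hW0 : ∀ l, 0 ≤ W l) (hW1 : ∀ k, ∑ l ∈ range k, W l ≤ 1)
    (hC : ∀ x, |f x| ≤ C) :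
    Summable fun j : Fin n → ℕ => (∏ i, W (j i)) * f (fun i i' => Q (j i) (j i')) := by
  refine Summable.of_norm_bounded (g := fun j => (∏ i, W (j i)) * C) ?_ fun j => ?_
  · exact (summable_of_sum_le (fun j => prod_nonneg fun i _ => hW0 _)
      (sum_prod_le_one hW0 hW1)).mul_right C
  · rw [Real.norm_eq_abs, abs_mul, abs_of_nonneg (prod_nonneg fun i _ => hW0 _)]
    exact mul_le_mul_of_nonneg_left (hC _) (prod_nonneg fun i _ => hW0 _)

lemma tendsto_finGibbs_finData (hW0 : ∀ l, 0 ≤ W l) (hW1 : ∀ k, ∑ l ∈ range k, W l ≤ 1)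
    (hC : ∀ x, |f x| ≤ C) :
    Tendsto (fun k => finGibbs n k f (finData k W Q)) atTop (𝓝 (gibbs W Q n f)) :=
  ((summable_gibbs_term hW0 hW1 hC).hasSum.comp tendsto_piFinset_range_atTop).congr fun _ =>
    (sum_pi_fin_eq_sum_piFinset_range _).symm

lemma gibbs_comp_perm (σ : Equiv.Perm ℕ) :
    gibbs (fun m => W (σ m)) (fun m m' => Q (σ m) (σ m')) n f = gibbs W Q n f :=
  (Equiv.piCongrRight fun _ : Fin n => σ).tsum_eq
    fun j => (∏ i, W (j i)) * f fun i i' => Q (j i) (j i')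

end FiniteGibbs

section RandomGibbs

variable {Ω Ω' : Type*} [MeasurableSpace Ω] [MeasurableSpace Ω'] {μ : Measure Ω} {ν : Measure Ω'}
  {n : ℕ} {f : (Fin n → Fin n → ℝ) → ℝ} {C : ℝ}

lemma tendsto_integral_finGibbs [IsFiniteMeasure μ] {W : Ω → ℕ → ℝ} {Q : Ω → ℕ → ℕ → ℝ}
    (hmeas : ∀ᶠ k in atTop, AEMeasurable (fun ω => finData k (W ω) (Q ω)) μ)
    (hW : ∀ᵐ ω ∂μ, (∀ l, 0 ≤ W ω l) ∧ ∀ k, ∑ l ∈ range k, W ω l ≤ 1)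
    (hf : Measurable f) (hC : ∀ x, |f x| ≤ C) :
    Tendsto (fun k => ∫ ω, finGibbs n k f (finData k (W ω) (Q ω)) ∂μ) atTop
      (𝓝 (∫ ω, gibbs (W ω) (Q ω) n f ∂μ)) :=
  tendsto_integral_filter_of_dominated_convergence (fun _ => C)
    (hmeas.mono fun _ hk => ((measurable_finGibbs hf).comp_aemeasurable hk).aestronglyMeasurable)
    (Eventually.of_forall fun k => hW.mono fun _ hω =>
      abs_finGibbs_le hC (forall_finData_mem_subProbData_iff.2 hω k))
    (integrable_const C)
    (hW.mono fun _ hω => tendsto_finGibbs_finData hω.1 hω.2 hC)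

theorem integral_gibbs_eq_of_identDistrib [IsFiniteMeasure μ] [IsFiniteMeasure ν]
    {W : Ω → ℕ → ℝ} {Q : Ω → ℕ → ℕ → ℝ} {W' : Ω' → ℕ → ℝ} {Q' : Ω' → ℕ → ℕ → ℝ}
    (hid : ∀ k, 1 ≤ k → IdentDistrib (fun ω => finData k (W ω) (Q ω))
      (fun ω => finData k (W' ω) (Q' ω)) μ ν)
    (hW' : ∀ᵐ ω ∂ν, (∀ l, 0 ≤ W' ω l) ∧ ∀ k, ∑ l ∈ range k, W' ω l ≤ 1)
    (hf : Measurable f) (hC : ∀ x, |f x| ≤ C) :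
    ∫ ω, gibbs (W ω) (Q ω) n f ∂μ = ∫ ω, gibbs (W' ω) (Q' ω) n f ∂ν := by
  have hW : ∀ᵐ ω ∂μ, (∀ l, 0 ≤ W ω l) ∧ ∀ k, ∑ l ∈ range k, W ω l ≤ 1 := by
    have hν : ∀ k, ∀ᵐ ω ∂ν, finData k (W' ω) (Q' ω) ∈ subProbData k :=
      ae_all_iff.1 (hW'.mono fun _ h => forall_finData_mem_subProbData_iff.2 h)
    have hμ : ∀ᵐ ω ∂μ, ∀ k, finData k (W ω) (Q ω) ∈ subProbData k := by
      refine ae_all_iff.2 fun k => ?_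
      rcases Nat.eq_zero_or_pos k with rfl | hk
      · exact Eventually.of_forall fun _ => by simp [subProbData]
      · exact (hid k hk).symm.ae_mem_snd measurableSet_subProbData (hν k)
    exact hμ.mono fun _ h => forall_finData_mem_subProbData_iff.1 h
  refine tendsto_nhds_unique_of_eventuallyEq
    (tendsto_integral_finGibbs ((eventually_ge_atTop 1).mono fun k hk =>
      (hid k hk).aemeasurable_fst) hW hf hC)
    (tendsto_integral_finGibbs ((eventually_ge_atTop 1).mono fun k hk =>
      (hid k hk).aemeasurable_snd) hW' hf hC) ?_
  filter_upwards [eventually_ge_atTop 1] with k hk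
  exact ((hid k hk).comp (measurable_finGibbs hf)).integral_eq

end RandomGibbs

lemma identDistrib_of_map_prod_eq_map_fst {α β γ : Type*} [MeasurableSpace α]
    [MeasurableSpace β] [MeasurableSpace γ] {μ : Measure α} {ν : Measure β}
    [IsProbabilityMeasure μ] [IsProbabilityMeasure ν] {X : α × β → γ} {Y : α → γ}
    (hY : Measurable Y) (h : (μ.prod ν).map X = (μ.prod ν).map fun ω => Y ω.1) :
    IdentDistrib X Y (μ.prod ν) μ where
  aemeasurable_fst := by
    have : IsProbabilityMeasure ((μ.prod ν).map X) :=
      h ▸ Measure.isProbabilityMeasure_map (hY.comp measurable_fst).aemeasurable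
    exact aemeasurable_of_map_neZero inferInstance
  aemeasurable_snd := hY.aemeasurable
  map_eq := by
    rw [h]
    change Measure.map (Y ∘ Prod.fst) (μ.prod ν) = _
    rw [← Measure.map_map hY measurable_fst, Measure.map_fst_prod, measure_univ, one_smul]

lemma measurable_inner_ℓ2 {α : Type*} [MeasurableSpace α] {x y : α → ℓ2} (hx : Measurable x)
    (hy : Measurable y) : Measurable fun a => inner ℝ (x a) (y a) := by
  have : Fact ((1 : ENNReal) ≤ 2) := ⟨one_le_two⟩
  have hcoord (i : ℕ) : Measurable fun v : ℓ2 => (v : ℕ → ℝ) i :=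
    ((continuous_apply i).comp lp.uniformContinuous_coe.continuous).measurable
  refine measurable_of_tendsto_metrizable
    (f := fun K a => ∑ i ∈ range K, (x a : ℕ → ℝ) i * (y a : ℕ → ℝ) i)
    (fun K => Finset.measurable_sum _ fun i _ => ((hcoord i).comp hx).mul ((hcoord i).comp hy))
    (tendsto_pi_nhds.2 fun a => ?_)
  simpa [mul_comm] using (lp.hasSum_inner (𝕜 := ℝ) (x a) (y a)).tendsto_sum_nat

theorem law_equality_implies_AC_average_general
    {Ω₁ Ω₂ : Type*} [MeasurableSpace Ω₁] [MeasurableSpace Ω₂]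
    (P₁ : Measure Ω₁) (P₂ : Measure Ω₂)
    [IsProbabilityMeasure P₁] [IsProbabilityMeasure P₂]
    (w : Ω₁ → ℕ → ℝ) (ξ : Ω₁ → ℕ → ℓ2)
    (hRM : IsRandomMeasure P₁ w ξ)
    (g : Ω₁ × Ω₂ → ℕ → ℝ)
    (t : ℝ) (prm : Ω₁ × Ω₂ → Equiv.Perm ℕ)
    (hLaw : ∀ k : ℕ, 1 ≤ k →
      Measure.map (fun ω =>
          ((fun l : Fin k => tilt w g t ω (prm ω l)),
           (fun l l' : Fin k => overlap ξ ω.1 (prm ω l) (prm ω l')))) (P₁.prod P₂)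
        = Measure.map (fun ω =>
            ((fun l : Fin k => w ω.1 l),
             (fun l l' : Fin k => overlap ξ ω.1 l l'))) (P₁.prod P₂)) :
    ∀ n : ℕ, 1 ≤ n → ∀ f : (Fin n → Fin n → ℝ) → ℝ, Measurable f → Bdd f →
      ∫ ω, gibbs (tilt w g t ω) (overlap ξ ω.1) n f ∂(P₁.prod P₂)
        = EGibbs P₁ w ξ n f := by
  rintro n - f hf ⟨C, hC⟩
  obtain ⟨hw, hξ, hG⟩ := hRM
  have hdata (k : ℕ) : Measurable fun ω₁ => finData k (w ω₁) (overlap ξ ω₁) := by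
    refine Measurable.prodMk (measurable_pi_lambda _ fun l => hw l)
      (measurable_pi_lambda _ fun l => measurable_pi_lambda _ fun l' => ?_)
    exact measurable_inner_ℓ2 (hξ l) (hξ l')
  have hsub : ∀ᵐ ω₁ ∂P₁, (∀ l, 0 ≤ w ω₁ l) ∧ ∀ k, ∑ l ∈ range k, w ω₁ l ≤ 1 :=
    hG.mono fun _ h => ⟨h.1, fun k => sum_le_hasSum _ (fun l _ => h.1 l) h.2.2.1⟩
  calc ∫ ω, gibbs (tilt w g t ω) (overlap ξ ω.1) n f ∂(P₁.prod P₂)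
      = ∫ ω, gibbs (fun m => tilt w g t ω (prm ω m))
          (fun m m' => overlap ξ ω.1 (prm ω m) (prm ω m')) n f ∂(P₁.prod P₂) := by
        simp only [gibbs_comp_perm]
    _ = EGibbs P₁ w ξ n f := integral_gibbs_eq_of_identDistrib
        (fun k hk => identDistrib_of_map_prod_eq_map_fst (hdata k) (hLaw k hk)) hsub hf hC

/-- **Lemma 1, weights-and-overlaps case.** Fix `p ≥ 1` with associated Gaussian
field `g`, `t ∈ ℝ` and a measurable reordering `prm` for `(p, t)`. If for every `k ≥ 1` the
joint law of the reordered tilted weights and overlaps coincides with the joint law of the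
original weights and overlaps, then `E⟨f⟩_t = E⟨f⟩` for every `n ≥ 1` and every bounded
measurable function `f` of the overlap array. -/
theorem law_equality_implies_AC_average
    {Ω₁ Ω₂ : Type*} [MeasurableSpace Ω₁] [MeasurableSpace Ω₂]
    (P₁ : Measure Ω₁) (P₂ : Measure Ω₂)
    [IsProbabilityMeasure P₁] [IsProbabilityMeasure P₂]
    (w : Ω₁ → ℕ → ℝ) (ξ : Ω₁ → ℕ → ℓ2)
    (hRM : IsRandomMeasure P₁ w ξ)
    (p : ℕ) (hp : 1 ≤ p) (g : Ω₁ × Ω₂ → ℕ → ℝ)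
    (hg : IsGaussianField P₁ P₂ ξ p g)
    (t : ℝ) (prm : Ω₁ × Ω₂ → Equiv.Perm ℕ)
    (hprm : IsReordering P₁ P₂ w g t prm)
    (hLaw : ∀ k : ℕ, 1 ≤ k →
      Measure.map (fun ω =>
          ((fun l : Fin k => tilt w g t ω (prm ω l)),
           (fun l l' : Fin k => overlap ξ ω.1 (prm ω l) (prm ω l')))) (P₁.prod P₂)
        = Measure.map (fun ω =>
            ((fun l : Fin k => w ω.1 l),
             (fun l l' : Fin k => overlap ξ ω.1 l l'))) (P₁.prod P₂)) :
    ∀ n : ℕ, 1 ≤ n → ∀ f : (Fin n → Fin n → ℝ) → ℝ, Measurable f → Bdd f →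
      ∫ ω, gibbs (tilt w g t ω) (overlap ξ ω.1) n f ∂(P₁.prod P₂)
        = EGibbs P₁ w ξ n f :=
  law_equality_implies_AC_average_general P₁ P₂ w ξ hRM g t prm hLaw
end
end
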